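/- arXiv:1003.3235 — 4 statements merged into one kernel-verified Lean document; each statement's English description precedes it below -/
import Mathlib

section
/- Let G be a finite group acting transitively on a finite type ι via a homomorphism μ : G →* Equiv.Perm ι. Let V : ι → Type be a family of finite-dimensional complex vector spaces and let ρ be a representation of G on the direct sum ⊕_{i ∈ ι} V i such that for every g ∈ G and i ∈ ι, ρ g maps the summand V i into the summand V (μ g i). Fix i₀ ∈ ι, let H be the stabilizer of i₀ in G, and let W = V i₀ equipped with the H-representation obtained by restricting ρ to H (which preserves V i₀). Then the G-representation ⊕_{i ∈ ι} V i is isomorphic to the induced representation Ind_H^G W = ℂ[G] ⊗_{ℂ[H]} W. -/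
open scoped TensorProduct DirectSum

/-- The stabilizer of `i₀` under a permutation action `μ : G →* Equiv.Perm ι`. -/
def permStabilizer {G ι : Type} [Group G] (μ : G →* Equiv.Perm ι) (i₀ : ι) :
    Subgroup G where
  carrier := {g : G | μ g i₀ = i₀}
  one_mem' := by simp
  mul_mem' := by
    intro a b ha hb
    simp only [Set.mem_setOf_eq, map_mul, Equiv.Perm.mul_apply] at *
    rw [hb, ha]
  inv_mem' := by
    intro a ha
    simp only [Set.mem_setOf_eq, map_inv] at *
    exact (Equiv.Perm.inv_eq_iff_eq).mpr ha.symm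

/-- The balancing relations defining `ℂ[G] ⊗_{ℂ[H]} W` as a quotient of
`ℂ[G] ⊗[ℂ] W`, for `H` the stabilizer of `i₀` and `σ` the `H`-representation
on `W`. -/
noncomputable def indRel {G ι : Type} [Group G] (μ : G →* Equiv.Perm ι) (i₀ : ι)
    {W : Type} [AddCommGroup W] [Module ℂ W]
    (σ : Representation ℂ (permStabilizer μ i₀) W) :
    Submodule ℂ (MonoidAlgebra ℂ G ⊗[ℂ] W) :=
  Submodule.span ℂ
    {z | ∃ (x : MonoidAlgebra ℂ G) (h : permStabilizer μ i₀) (w : W),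
      z = (x * MonoidAlgebra.of ℂ G (h : G)) ⊗ₜ[ℂ] w - x ⊗ₜ[ℂ] (σ h w)}

/-- The underlying space of the induced representation
`Ind_H^G W = ℂ[G] ⊗_{ℂ[H]} W`. -/
def IndSpace {G ι : Type} [Group G] (μ : G →* Equiv.Perm ι) (i₀ : ι)
    {W : Type} [AddCommGroup W] [Module ℂ W]
    (σ : Representation ℂ (permStabilizer μ i₀) W) : Type :=
  (MonoidAlgebra ℂ G ⊗[ℂ] W) ⧸ indRel μ i₀ σ

noncomputable instance {G ι : Type} [Group G] (μ : G →* Equiv.Perm ι) (i₀ : ι)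
    {W : Type} [AddCommGroup W] [Module ℂ W]
    (σ : Representation ℂ (permStabilizer μ i₀) W) :
    AddCommGroup (IndSpace μ i₀ σ) :=
  inferInstanceAs (AddCommGroup ((MonoidAlgebra ℂ G ⊗[ℂ] W) ⧸ indRel μ i₀ σ))

noncomputable instance {G ι : Type} [Group G] (μ : G →* Equiv.Perm ι) (i₀ : ι)
    {W : Type} [AddCommGroup W] [Module ℂ W]
    (σ : Representation ℂ (permStabilizer μ i₀) W) :
    Module ℂ (IndSpace μ i₀ σ) :=
  inferInstanceAs (Module ℂ ((MonoidAlgebra ℂ G ⊗[ℂ] W) ⧸ indRel μ i₀ σ))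

/-
Fix `s i ∈ G` with `s i • i₀ = i`. Frobenius reciprocity turns the `H`-equivariant inclusion
`V i₀ → ⨁ i, V i` into a `G`-map `x ⊗ w ↦ ρ(x) w` from `ℂ[G] ⊗_{ℂ[H]} V i₀`. Its inverse sends
`v ∈ V i` to `s i ⊗ ρ(s i)⁻¹ v`: this lands in `V i₀` because `ρ` permutes the blocks, and it
undoes `g ⊗ w` because `g = s (g • i₀) * h` with `h ∈ H`, and `h` can be moved across the tensor
sign.
-/
namespace IndSpace

variable {G ι : Type} [Group G] {μ : G →* Equiv.Perm ι} {i₀ : ι}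
  {W : Type} [AddCommGroup W] [Module ℂ W] {σ : Representation ℂ (permStabilizer μ i₀) W}

lemma mkQ_mul_of_tmul (x : MonoidAlgebra ℂ G) (h : permStabilizer μ i₀) (w : W) :
    (indRel μ i₀ σ).mkQ ((x * MonoidAlgebra.of ℂ G h) ⊗ₜ w) =
      (indRel μ i₀ σ).mkQ (x ⊗ₜ σ h w) :=
  (Submodule.Quotient.eq _).mpr (Submodule.subset_span ⟨x, h, w, rfl⟩)

lemma hom_ext {U : Type} [AddCommGroup U] [Module ℂ U] {f f' : IndSpace μ i₀ σ →ₗ[ℂ] U}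
    (H : ∀ (g : G) (w : W), f ((indRel μ i₀ σ).mkQ (MonoidAlgebra.of ℂ G g ⊗ₜ w)) =
      f' ((indRel μ i₀ σ).mkQ (MonoidAlgebra.of ℂ G g ⊗ₜ w))) :
    f = f' :=
  Submodule.linearMap_qext _ <| TensorProduct.ext <| MonoidAlgebra.lhom_ext' fun g =>
    LinearMap.ext_ring <| LinearMap.ext fun w => H g w

variable (σ) in
noncomputable def rep : Representation ℂ G (IndSpace μ i₀ σ) where
  toFun g := (indRel μ i₀ σ).mapQ _
    ((LinearMap.mulLeft ℂ (MonoidAlgebra.of ℂ G g)).rTensor W) <| by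
      rw [indRel, Submodule.span_le]
      rintro _ ⟨x, h, w, rfl⟩
      simp only [SetLike.mem_coe, Submodule.mem_comap, map_sub, LinearMap.rTensor_tmul,
        LinearMap.mulLeft_apply, ← mul_assoc]
      exact Submodule.subset_span ⟨MonoidAlgebra.of ℂ G g * x, h, w, rfl⟩
  map_one' := hom_ext fun g w => by
    change (indRel μ i₀ σ).mkQ ((MonoidAlgebra.of ℂ G 1 * _) ⊗ₜ w) = _
    rw [map_one, one_mul]
    rfl
  map_mul' g g' := hom_ext fun g'' w => by
    change (indRel μ i₀ σ).mkQ ((MonoidAlgebra.of ℂ G (g * g') * _) ⊗ₜ w) =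
      (indRel μ i₀ σ).mkQ ((MonoidAlgebra.of ℂ G g * (MonoidAlgebra.of ℂ G g' * _)) ⊗ₜ w)
    rw [map_mul, mul_assoc]

lemma rep_mkQ_tmul (g : G) (x : MonoidAlgebra ℂ G) (w : W) :
    rep σ g ((indRel μ i₀ σ).mkQ (x ⊗ₜ w)) =
      (indRel μ i₀ σ).mkQ ((MonoidAlgebra.of ℂ G g * x) ⊗ₜ w) :=
  rfl

variable {U : Type} [AddCommGroup U] [Module ℂ U] (ρ : Representation ℂ G U)
  (f : W →ₗ[ℂ] U)
  (hf : ∀ (h : permStabilizer μ i₀) (w : W), ρ h (f w) = f (σ h w))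

noncomputable def lift : IndSpace μ i₀ σ →ₗ[ℂ] U :=
  (indRel μ i₀ σ).liftQ
    (TensorProduct.lift (LinearMap.lcomp ℂ U f ∘ₗ ρ.asAlgebraHom.toLinearMap)) <| by
    rw [indRel, Submodule.span_le]
    rintro _ ⟨x, h, w, rfl⟩
    simp [hf]

lemma lift_mkQ_tmul (x : MonoidAlgebra ℂ G) (w : W) :
    lift ρ f hf ((indRel μ i₀ σ).mkQ (x ⊗ₜ w)) = ρ.asAlgebraHom x (f w) :=
  rfl

lemma lift_rep (g : G) (z : IndSpace μ i₀ σ) :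
    lift ρ f hf (rep σ g z) = ρ g (lift ρ f hf z) := by
  have : lift ρ f hf ∘ₗ rep σ g = ρ g ∘ₗ lift ρ f hf := hom_ext fun g' w => by
    change lift ρ f hf (rep σ g ((indRel μ i₀ σ).mkQ (MonoidAlgebra.of ℂ G g' ⊗ₜ w))) =
      ρ g (lift ρ f hf ((indRel μ i₀ σ).mkQ (MonoidAlgebra.of ℂ G g' ⊗ₜ w)))
    rw [rep_mkQ_tmul, lift_mkQ_tmul, lift_mkQ_tmul, map_mul, Module.End.mul_apply,
      Representation.asAlgebraHom_of]
  exact LinearMap.congr_fun this z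

end IndSpace

section PermutedBlocks

open DirectSum

variable {G ι : Type} [Group G] [DecidableEq ι] {μ : G →* Equiv.Perm ι}
  {V : ι → Type} [∀ i, AddCommGroup (V i)] [∀ i, Module ℂ (V i)]
  {ρ : Representation ℂ G (⨁ i, V i)}

lemma exists_lof_of_apply_eq
    (hblock : ∀ (g : G) (i : ι) (v : V i), ∃ w : V (μ g i),
      ρ g (lof ℂ ι V i v) = lof ℂ ι V (μ g i) w)
    {g : G} {i j : ι} (hij : μ g i = j) (v : V i) :
    ∃ w : V j, ρ g (lof ℂ ι V i v) = lof ℂ ι V j w := by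
  subst hij
  exact hblock g i v

variable {i₀ : ι} (ρ) (σ : Representation ℂ (permStabilizer μ i₀) (V i₀)) (s : ι → G)

namespace IndSpace

noncomputable def ofDirectSum : (⨁ i, V i) →ₗ[ℂ] IndSpace μ i₀ σ :=
  toModule ℂ ι _ fun i => (indRel μ i₀ σ).mkQ ∘ₗ
    TensorProduct.mk ℂ (MonoidAlgebra ℂ G) (V i₀) (MonoidAlgebra.of ℂ G (s i)) ∘ₗ
    component ℂ ι V i₀ ∘ₗ ρ (s i)⁻¹ ∘ₗ lof ℂ ι V i

lemma ofDirectSum_lof (i : ι) (v : V i) :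
    ofDirectSum ρ σ s (lof ℂ ι V i v) = (indRel μ i₀ σ).mkQ
      (MonoidAlgebra.of ℂ G (s i) ⊗ₜ component ℂ ι V i₀ (ρ (s i)⁻¹ (lof ℂ ι V i v))) :=
  toModule_lof ℂ i v

variable {ρ σ s}

lemma lift_comp_ofDirectSum
    (hblock : ∀ (g : G) (i : ι) (v : V i), ∃ w : V (μ g i),
      ρ g (lof ℂ ι V i v) = lof ℂ ι V (μ g i) w)
    (hs : ∀ i, μ (s i) i₀ = i)
    (hσ : ∀ (h : permStabilizer μ i₀) (v : V i₀),
      ρ h (lof ℂ ι V i₀ v) = lof ℂ ι V i₀ (σ h v)) :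
    lift ρ (lof ℂ ι V i₀) hσ ∘ₗ ofDirectSum ρ σ s = LinearMap.id :=
  linearMap_ext ℂ fun i => LinearMap.ext fun v => by
    have hi : μ (s i)⁻¹ i = i₀ := by rw [map_inv, Equiv.Perm.inv_eq_iff_eq, hs]
    obtain ⟨u, hu⟩ := exists_lof_of_apply_eq hblock hi v
    rw [LinearMap.comp_apply, LinearMap.comp_apply, ofDirectSum_lof, hu, component.lof_self,
      lift_mkQ_tmul, Representation.asAlgebraHom_of, ← hu, Representation.self_inv_apply]
    rfl

lemma ofDirectSum_comp_lift
    (hblock : ∀ (g : G) (i : ι) (v : V i), ∃ w : V (μ g i),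
      ρ g (lof ℂ ι V i v) = lof ℂ ι V (μ g i) w)
    (hs : ∀ i, μ (s i) i₀ = i)
    (hσ : ∀ (h : permStabilizer μ i₀) (v : V i₀),
      ρ h (lof ℂ ι V i₀ v) = lof ℂ ι V i₀ (σ h v)) :
    ofDirectSum ρ σ s ∘ₗ lift ρ (lof ℂ ι V i₀) hσ = LinearMap.id := by
  refine hom_ext fun g w => ?_
  change ofDirectSum ρ σ s (lift ρ _ hσ ((indRel μ i₀ σ).mkQ (MonoidAlgebra.of ℂ G g ⊗ₜ w))) =
    (indRel μ i₀ σ).mkQ (MonoidAlgebra.of ℂ G g ⊗ₜ w)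
  -- `g = s (μ g i₀) * h` with `h` in the stabilizer, and `h` moves across the tensor sign.
  let h : permStabilizer μ i₀ := ⟨(s (μ g i₀))⁻¹ * g, by
    change μ _ i₀ = i₀
    rw [map_mul, Equiv.Perm.mul_apply, map_inv, Equiv.Perm.inv_eq_iff_eq, hs]⟩
  have hg : MonoidAlgebra.of ℂ G g =
      MonoidAlgebra.of ℂ G (s (μ g i₀)) * MonoidAlgebra.of ℂ G h := by
    rw [← map_mul, mul_inv_cancel_left]
  obtain ⟨u, hu⟩ := hblock g i₀ w
  rw [lift_mkQ_tmul, Representation.asAlgebraHom_of, hu, ofDirectSum_lof, ← hu,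
    ← Module.End.mul_apply, ← map_mul, show (s (μ g i₀))⁻¹ * g = h from rfl, hσ,
    component.lof_self, hg, mkQ_mul_of_tmul]

end IndSpace

theorem directSum_iso_induced_general {G ι : Type} [Group G] [DecidableEq ι]
    (μ : G →* Equiv.Perm ι) (htrans : ∀ i j : ι, ∃ g : G, μ g i = j)
    (V : ι → Type) [∀ i, AddCommGroup (V i)] [∀ i, Module ℂ (V i)]
    (ρ : Representation ℂ G (⨁ i, V i))
    (hblock : ∀ (g : G) (i : ι) (v : V i), ∃ w : V (μ g i),
      ρ g (DirectSum.lof ℂ ι V i v) = DirectSum.lof ℂ ι V (μ g i) w)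
    (i₀ : ι)
    (σ : Representation ℂ (permStabilizer μ i₀) (V i₀))
    (hσ : ∀ (h : permStabilizer μ i₀) (v : V i₀),
      ρ (h : G) (DirectSum.lof ℂ ι V i₀ v) = DirectSum.lof ℂ ι V i₀ (σ h v)) :
    ∃ (ρInd : Representation ℂ G (IndSpace μ i₀ σ))
      (e : (⨁ i, V i) ≃ₗ[ℂ] IndSpace μ i₀ σ),
      (∀ (g : G) (x : MonoidAlgebra ℂ G) (w : V i₀),
        ρInd g ((indRel μ i₀ σ).mkQ (x ⊗ₜ[ℂ] w)) =
          (indRel μ i₀ σ).mkQ ((MonoidAlgebra.of ℂ G g * x) ⊗ₜ[ℂ] w)) ∧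
      (∀ (g : G) (v : ⨁ i, V i), e (ρ g v) = ρInd g (e v)) := by
  choose s hs using htrans i₀
  let e : IndSpace μ i₀ σ ≃ₗ[ℂ] ⨁ i, V i :=
    LinearEquiv.ofLinearMap (IndSpace.lift ρ _ hσ) (IndSpace.ofDirectSum ρ σ s)
      (IndSpace.lift_comp_ofDirectSum hblock hs hσ) (IndSpace.ofDirectSum_comp_lift hblock hs hσ)
  refine ⟨IndSpace.rep σ, e.symm, IndSpace.rep_mkQ_tmul, fun g v => e.injective ?_⟩
  rw [e.apply_symm_apply]
  change ρ g v = IndSpace.lift ρ _ hσ (IndSpace.rep σ g (e.symm v))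
  rw [IndSpace.lift_rep]
  exact congrArg (ρ g) (e.apply_symm_apply v).symm

/-- If a finite group `G` acts transitively on the blocks of a direct sum
`⨁ i, V i` via `μ`, permuting the summands (`ρ g` maps `V i` into `V (μ g i)`),
and `σ` is the representation of the stabilizer `H` of `i₀` on `W = V i₀`
obtained by restricting `ρ`, then `⨁ i, V i` is `G`-equivariantly isomorphic to
the induced representation `Ind_H^G W = ℂ[G] ⊗_{ℂ[H]} W`, where the `G`-action
on the latter is by left multiplication on the first tensor factor. -/
theorem directSum_iso_induced {G ι : Type} [Group G] [Fintype G] [Fintype ι]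
    [DecidableEq ι]
    (μ : G →* Equiv.Perm ι) (htrans : ∀ i j : ι, ∃ g : G, μ g i = j)
    (V : ι → Type) [∀ i, AddCommGroup (V i)] [∀ i, Module ℂ (V i)]
    [∀ i, FiniteDimensional ℂ (V i)]
    (ρ : Representation ℂ G (⨁ i, V i))
    (hblock : ∀ (g : G) (i : ι) (v : V i), ∃ w : V (μ g i),
      ρ g (DirectSum.lof ℂ ι V i v) = DirectSum.lof ℂ ι V (μ g i) w)
    (i₀ : ι)
    (σ : Representation ℂ (permStabilizer μ i₀) (V i₀))
    (hσ : ∀ (h : permStabilizer μ i₀) (v : V i₀),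
      ρ (h : G) (DirectSum.lof ℂ ι V i₀ v) = DirectSum.lof ℂ ι V i₀ (σ h v)) :
    ∃ (ρInd : Representation ℂ G (IndSpace μ i₀ σ))
      (e : (⨁ i, V i) ≃ₗ[ℂ] IndSpace μ i₀ σ),
      (∀ (g : G) (x : MonoidAlgebra ℂ G) (w : V i₀),
        ρInd g ((indRel μ i₀ σ).mkQ (x ⊗ₜ[ℂ] w)) =
          (indRel μ i₀ σ).mkQ ((MonoidAlgebra.of ℂ G g * x) ⊗ₜ[ℂ] w)) ∧
      (∀ (g : G) (v : ⨁ i, V i), e (ρ g v) = ρInd g (e v)) :=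
  directSum_iso_induced_general μ htrans V ρ hblock i₀ σ hσ
end PermutedBlocks
end

section
/- Let G be a finite group, n ≥ 1, and r : G →* PSL(n, ℂ) a group homomorphism, where PSL(n, ℂ) = SL(n, ℂ) / Z(SL(n, ℂ)). Then there exist a finite group Ĝ, a surjective homomorphism p : Ĝ →* G whose kernel is contained in the center of Ĝ and is cyclic of order dividing n, and a homomorphism r̃ : Ĝ →* SL(n, ℂ) such that q ∘ r̃ = r ∘ p, where q : SL(n, ℂ) → PSL(n, ℂ) is the quotient map. -/
/-- `PSL(n, ℂ)`, the quotient of `SL(n, ℂ)` by its center. -/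
abbrev PSL (n : ℕ) :=
  Matrix.SpecialLinearGroup (Fin n) ℂ ⧸ Subgroup.center (Matrix.SpecialLinearGroup (Fin n) ℂ)

/-- The quotient map `SL(n, ℂ) → PSL(n, ℂ)`. -/
abbrev slProj (n : ℕ) : Matrix.SpecialLinearGroup (Fin n) ℂ →* PSL n :=
  QuotientGroup.mk' (Subgroup.center (Matrix.SpecialLinearGroup (Fin n) ℂ))

/-!
Pull back the central extension `μₙ → SL(n, ℂ) → PSL(n, ℂ)` along `r`. The fibre product
`Ĝ = G ×_{PSL(n, ℂ)} SL(n, ℂ)` maps onto `G` with kernel `1 × Z(SL(n, ℂ)) ≅ μₙ`, which is central,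
finite and cyclic of order dividing `n`; hence `Ĝ` is finite, and its projection to `SL(n, ℂ)`
linearizes `r`.
-/

open Function Subgroup MonoidHom

namespace MonoidHom

variable {G H Q : Type*} [Group G] [Group H] [Group Q] (f : G →* Q) (q : H →* Q)

def pullback : Subgroup (G × H) :=
  (f.comp (fst G H)).eqLocus (q.comp (snd G H))

theorem mem_pullback {x : G × H} : x ∈ f.pullback q ↔ f x.1 = q x.2 := Iff.rfl

def pullbackFst : f.pullback q →* G := (fst G H).comp (f.pullback q).subtype

def pullbackSnd : f.pullback q →* H := (snd G H).comp (f.pullback q).subtype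

theorem pullback_comm (x : f.pullback q) : f (f.pullbackFst q x) = q (f.pullbackSnd q x) := x.2

variable {f q}

theorem pullbackFst_surjective (hq : Surjective q) : Surjective (f.pullbackFst q) := fun g ↦
  let ⟨h, hh⟩ := hq (f g)
  ⟨⟨(g, h), hh.symm⟩, rfl⟩

theorem mem_ker_pullbackFst {x : f.pullback q} :
    x ∈ (f.pullbackFst q).ker ↔ (x : G × H).1 = 1 := Iff.rfl

theorem pullbackSnd_mem_ker {x : f.pullback q} (hx : x ∈ (f.pullbackFst q).ker) :
    f.pullbackSnd q x ∈ q.ker := by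
  rw [mem_ker, ← pullback_comm, hx, map_one]

variable (f q)

def kerPullbackFstEquiv : (f.pullbackFst q).ker ≃* q.ker where
  toFun x := ⟨f.pullbackSnd q x, pullbackSnd_mem_ker x.2⟩
  invFun h := ⟨⟨(1, h), by rw [mem_pullback, map_one, h.2]⟩, rfl⟩
  left_inv x := Subtype.ext <| Subtype.ext <| Prod.ext x.2.symm rfl
  right_inv _ := rfl
  map_mul' _ _ := rfl

variable {f q}

theorem ker_pullbackFst_le_center (hq : q.ker ≤ center H) :
    (f.pullbackFst q).ker ≤ center (f.pullback q) := by
  intro x hx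
  rw [mem_center_iff]
  intro y
  ext
  · simp [(mem_ker_pullbackFst).1 hx]
  · exact mem_center_iff.1 (hq (pullbackSnd_mem_ker hx)) (y : G × H).2

theorem finite_pullback [Finite G] [Finite q.ker] : Finite (f.pullback q) := by
  have := Finite.of_equiv _ (kerPullbackFstEquiv f q).toEquiv.symm
  exact (finite_iff_finite_ker_range (f.pullbackFst q)).2 ⟨inferInstance, inferInstance⟩

end MonoidHom

theorem card_rootsOfUnity_dvd (R : Type*) [CommRing R] [IsDomain R] (k : ℕ) [NeZero k] :
    Nat.card (rootsOfUnity k R) ∣ k := by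
  rw [← IsCyclic.exponent_eq_card]
  exact Monoid.exponent_dvd_of_forall_pow_eq_one fun g ↦ OneMemClass.coe_eq_one.mp g.prop

namespace Matrix.SpecialLinearGroup

variable (ι R : Type*) [DecidableEq ι] [Fintype ι] [CommRing R] [IsDomain R]

instance : IsCyclic (center (SpecialLinearGroup ι R)) :=
  have : NeZero (max (Fintype.card ι) 1) := ⟨by positivity⟩
  isCyclic_of_surjective _ center_equiv_rootsOfUnity.symm.surjective

instance : Finite (center (SpecialLinearGroup ι R)) :=
  have : NeZero (max (Fintype.card ι) 1) := ⟨by positivity⟩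
  Finite.of_equiv _ center_equiv_rootsOfUnity.symm.toEquiv

theorem card_center_dvd : Nat.card (center (SpecialLinearGroup ι R)) ∣ Fintype.card ι := by
  rw [Nat.card_congr center_equiv_rootsOfUnity.toEquiv]
  rcases Nat.eq_zero_or_pos (Fintype.card ι) with h | h
  · rw [h]; exact dvd_zero _
  · have : NeZero (Fintype.card ι) := ⟨h.ne'⟩
    rw [max_eq_left h]
    exact card_rootsOfUnity_dvd R _

end Matrix.SpecialLinearGroup

theorem projective_rep_linearizes_general {G : Type} [Group G] [Finite G] {n : ℕ}
    (r : G →* PSL n) :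
    ∃ (Ghat : Type) (_ : Group Ghat) (_ : Finite Ghat)
      (p : Ghat →* G) (rtilde : Ghat →* Matrix.SpecialLinearGroup (Fin n) ℂ),
      Function.Surjective p ∧
      p.ker ≤ Subgroup.center Ghat ∧
      IsCyclic p.ker ∧
      Nat.card p.ker ∣ n ∧
      ∀ x : Ghat, slProj n (rtilde x) = r (p x) := by
  have hker : (slProj n).ker = center _ := QuotientGroup.ker_mk' _
  have : Finite (slProj n).ker := by rw [hker]; infer_instance
  have : Finite (r.pullback (slProj n)) := finite_pullback
  refine ⟨r.pullback (slProj n), inferInstance, inferInstance, r.pullbackFst (slProj n),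
    r.pullbackSnd (slProj n), pullbackFst_surjective (QuotientGroup.mk'_surjective _),
    ker_pullbackFst_le_center hker.le, ?_, ?_, fun x ↦ (pullback_comm r _ x).symm⟩
  · have : IsCyclic (slProj n).ker := by rw [hker]; infer_instance
    exact isCyclic_of_surjective _ (kerPullbackFstEquiv r _).symm.surjective
  · rw [Nat.card_congr (kerPullbackFstEquiv r _).toEquiv, hker]
    simpa only [Fintype.card_fin] using Matrix.SpecialLinearGroup.card_center_dvd (Fin n) ℂ

/-- Every projective representation `r : G →* PSL(n, ℂ)` of a finite group `G` is
linearized by some finite central extension `p : Ghat →* G` whose kernel is cyclic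
of order dividing `n`. -/
theorem projective_rep_linearizes {G : Type} [Group G] [Finite G] {n : ℕ} (hn : 1 ≤ n)
    (r : G →* PSL n) :
    ∃ (Ghat : Type) (_ : Group Ghat) (_ : Finite Ghat)
      (p : Ghat →* G) (rtilde : Ghat →* Matrix.SpecialLinearGroup (Fin n) ℂ),
      Function.Surjective p ∧
      p.ker ≤ Subgroup.center Ghat ∧
      IsCyclic p.ker ∧
      Nat.card p.ker ∣ n ∧
      ∀ x : Ghat, slProj n (rtilde x) = r (p x) :=
  projective_rep_linearizes_general r
end

section
/- Let p : Ĝ →* G be a surjective homomorphism of finite groups whose kernel K is contained in the center of Ĝ, and let s : G → Ĝ be a section of p with s 1 = 1. Assume the extension is sufficient: for every 2-cocycle c : G × G → ℂˣ, the inflated cocycle (x,y) ↦ c(p x, p y) on Ĝ is a 2-coboundary. Then every 2-cocycle c on G with values in ℂˣ is cohomologous to the transgression cocycle of some homomorphism τ : K →* ℂˣ, i.e. there exist τ : K →* ℂˣ and b : G → ℂˣ with c(g,h) = τ(s(g) * s(h) * s(g*h)⁻¹) · b(g) · b(h) · b(g*h)⁻¹ for all g, h ∈ G. -/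
/-- For a sufficient central extension `p : Ghat →* G` of finite groups (every
2-cocycle on `G` inflates to a 2-coboundary on `Ghat`), every 2-cocycle on `G`
with values in `ℂˣ` is cohomologous to the transgression cocycle of some
character `τ` of the kernel. -/
theorem cocycle_cohomologous_to_transgression {Ghat G : Type} [Group Ghat] [Group G]
    [Finite Ghat] [Finite G]
    (p : Ghat →* G) (hp : Function.Surjective p)
    (hcentral : p.ker ≤ Subgroup.center Ghat)
    (s : G → Ghat) (hs : ∀ g : G, p (s g) = g) (hs1 : s 1 = 1)
    (hsuff : ∀ c : G × G → ℂˣ,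
      (∀ g h k : G, c (g, h) * c (g * h, k) = c (g, h * k) * c (h, k)) →
      ∃ b : Ghat → ℂˣ, ∀ x y : Ghat, c (p x, p y) = b x * b y * (b (x * y))⁻¹)
    (c : G × G → ℂˣ)
    (hc : ∀ g h k : G, c (g, h) * c (g * h, k) = c (g, h * k) * c (h, k)) :
    ∃ (τ : p.ker →* ℂˣ) (b : G → ℂˣ),
      ∀ (g h : G) (hm : s g * s h * (s (g * h))⁻¹ ∈ p.ker),
        c (g, h) = τ ⟨s g * s h * (s (g * h))⁻¹, hm⟩ * b g * b h * (b (g * h))⁻¹ := by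
  obtain ⟨β, hβ⟩ := hsuff c hc
  have h11 : ∀ h : G, c (1, h) = c (1, 1) := by
    intro h
    have := hc 1 1 h
    simp only [one_mul] at this
    exact (mul_right_cancel this).symm
  have hβ1 : c (1, 1) = β 1 := by simpa using hβ 1 1
  have key : ∀ x y : Ghat, x ∈ p.ker → β (x * y) = β x * β y * (β 1)⁻¹ := by
    intro x y hx
    have hpx : p x = 1 := hx
    have h1 := hβ x y
    rw [hpx, h11, hβ1] at h1
    have h2 : β (x * y) * β 1 = β x * β y := by rw [mul_comm, h1]; group
    exact eq_mul_inv_iff_mul_eq.mpr h2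
  have τmul : ∀ k₁ k₂ : p.ker, β 1 * (β (↑(k₁ * k₂) : Ghat))⁻¹
      = (β 1 * (β (k₁ : Ghat))⁻¹) * (β 1 * (β (k₂ : Ghat))⁻¹) := by
    intro k₁ k₂
    have h := key (k₁ : Ghat) (k₂ : Ghat) k₁.2
    push_cast
    rw [h]
    simp [mul_inv, mul_comm, mul_assoc, mul_left_comm]
  refine ⟨{ toFun := fun k => β 1 * (β (k : Ghat))⁻¹,
            map_one' := by simp,
            map_mul' := τmul }, fun g => β (s g), ?_⟩
  intro g h hm
  simp only [MonoidHom.coe_mk, OneHom.coe_mk]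
  have hdecomp : (s g * s h * (s (g * h))⁻¹) * s (g * h) = s g * s h := by group
  have hk := key (s g * s h * (s (g * h))⁻¹) (s (g * h)) hm
  rw [hdecomp] at hk
  have hcgh : c (g, h) = β (s g) * β (s h) * (β (s g * s h))⁻¹ := by
    have := hβ (s g) (s h)
    rwa [hs, hs] at this
  rw [hcgh, hk]
  simp [mul_inv, mul_comm, mul_assoc, mul_left_comm]
end

section
/- Let p : Ĝ →* G be a surjective homomorphism of finite groups whose kernel K is contained in the center of Ĝ, and let s : G → Ĝ be a section of p with s 1 = 1. For homomorphisms τ, τ' : K →* ℂˣ, the transgression cocycles c(g,h) = τ(s(g) * s(h) * s(g*h)⁻¹) and c'(g,h) = τ'(s(g) * s(h) * s(g*h)⁻¹) are cohomologous if and only if the homomorphism τ' · τ⁻¹ : K →* ℂˣ extends to a group homomorphism Ĝ →* ℂˣ, i.e. there exists ψ : Ĝ →* ℂˣ with ψ k = τ'(k) · τ(k)⁻¹ for all k ∈ K. -/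
/-- The transgression cocycles of two kernel characters `τ`, `τ'` of a central
extension `p : Ghat →* G` of finite groups are cohomologous if and only if the
character `τ' · τ⁻¹` of the kernel extends to a character of `Ghat`. -/
theorem transgressions_cohomologous_iff {Ghat G : Type} [Group Ghat] [Group G]
    [Finite Ghat] [Finite G]
    (p : Ghat →* G) (hp : Function.Surjective p)
    (hcentral : p.ker ≤ Subgroup.center Ghat)
    (s : G → Ghat) (hs : ∀ g : G, p (s g) = g) (hs1 : s 1 = 1)
    (τ τ' : p.ker →* ℂˣ)
    (c c' : G × G → ℂˣ)
    (hc : ∀ (g h : G) (hm : s g * s h * (s (g * h))⁻¹ ∈ p.ker),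
      c (g, h) = τ ⟨s g * s h * (s (g * h))⁻¹, hm⟩)
    (hc' : ∀ (g h : G) (hm : s g * s h * (s (g * h))⁻¹ ∈ p.ker),
      c' (g, h) = τ' ⟨s g * s h * (s (g * h))⁻¹, hm⟩) :
    (∃ b : G → ℂˣ, ∀ g h : G,
        c' (g, h) = c (g, h) * (b g * b h * (b (g * h))⁻¹)) ↔
    (∃ ψ : Ghat →* ℂˣ, ∀ k : p.ker, ψ (k : Ghat) = τ' k * (τ k)⁻¹) := by
  have hmemz : ∀ g h : G, s g * s h * (s (g * h))⁻¹ ∈ p.ker := by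
    intro g h
    simp only [MonoidHom.mem_ker, map_mul, map_inv, hs]
    group
  have hmemk : ∀ x : Ghat, x * (s (p x))⁻¹ ∈ p.ker := by
    intro x
    simp [MonoidHom.mem_ker, hs]
  set σ : p.ker →* ℂˣ := τ' * τ⁻¹ with hσ
  have hσval : ∀ k : p.ker, σ k = τ' k * (τ k)⁻¹ := fun k => rfl
  constructor
  · rintro ⟨b, hb⟩
    -- σ of the cocycle element equals the coboundary
    have hσz : ∀ g h : G, σ ⟨s g * s h * (s (g * h))⁻¹, hmemz g h⟩
        = b g * b h * (b (g * h))⁻¹ := by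
      intro g h
      have h1 := hb g h
      rw [hc g h (hmemz g h), hc' g h (hmemz g h)] at h1
      rw [hσval, h1]
      exact mul_inv_cancel_comm _ _
    have hb1 : b 1 = 1 := by
      have h1 := hσz 1 1
      have he : (⟨s 1 * s 1 * (s ((1:G) * 1))⁻¹, hmemz 1 1⟩ : p.ker) = 1 := by
        ext
        simp [hs1]
      rw [he, map_one] at h1
      have : (1:ℂˣ) = b 1 := by
        rw [h1]
        simp
      exact this.symm
    have hmul : ∀ x y : Ghat,
        (σ ⟨x * y * (s (p (x * y)))⁻¹, hmemk (x * y)⟩ * b (p (x * y)))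
        = (σ ⟨x * (s (p x))⁻¹, hmemk x⟩ * b (p x))
          * (σ ⟨y * (s (p y))⁻¹, hmemk y⟩ * b (p y)) := by
      intro x y
      have hcomm : (s (p x))⁻¹ * (y * (s (p y))⁻¹) = (y * (s (p y))⁻¹) * (s (p x))⁻¹ :=
        Subgroup.mem_center_iff.mp (hcentral (hmemk y)) _
      have key : x * y * (s (p x * p y))⁻¹
          = (x * (s (p x))⁻¹) * (y * (s (p y))⁻¹)
            * (s (p x) * s (p y) * (s (p x * p y))⁻¹) := by
        calc x * y * (s (p x * p y))⁻¹
            = x * ((y * (s (p y))⁻¹) * (s (p x))⁻¹)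
              * (s (p x) * s (p y) * (s (p x * p y))⁻¹) := by group
          _ = x * ((s (p x))⁻¹ * (y * (s (p y))⁻¹))
              * (s (p x) * s (p y) * (s (p x * p y))⁻¹) := by rw [hcomm]
          _ = (x * (s (p x))⁻¹) * (y * (s (p y))⁻¹)
              * (s (p x) * s (p y) * (s (p x * p y))⁻¹) := by group
      have hsub : (⟨x * y * (s (p (x * y)))⁻¹, hmemk (x * y)⟩ : p.ker)
          = ⟨x * (s (p x))⁻¹, hmemk x⟩ * ⟨y * (s (p y))⁻¹, hmemk y⟩
            * ⟨s (p x) * s (p y) * (s (p x * p y))⁻¹, hmemz (p x) (p y)⟩ := by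
        ext
        simpa [map_mul] using key
      rw [hsub, map_mul, map_mul, hσz, map_mul]
      simp only [mul_assoc, inv_mul_cancel_left]
      simp [mul_comm, mul_left_comm, mul_assoc]
    refine ⟨MonoidHom.mk' (fun x => σ ⟨x * (s (p x))⁻¹, hmemk x⟩ * b (p x)) hmul, ?_⟩
    intro k
    have hk : p (k : Ghat) = 1 := MonoidHom.mem_ker.mp k.2
    have he : (⟨(k : Ghat) * (s (p (k : Ghat)))⁻¹, hmemk (k : Ghat)⟩ : p.ker) = k := by
      ext
      simp [hk, hs1]
    simp only [MonoidHom.mk'_apply]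
    rw [he, hk, hb1, mul_one]
    exact hσval k
  · rintro ⟨ψ, hψ⟩
    refine ⟨fun g => ψ (s g), fun g h => ?_⟩
    dsimp only
    rw [hc g h (hmemz g h), hc' g h (hmemz g h)]
    have h1 := hψ ⟨s g * s h * (s (g * h))⁻¹, hmemz g h⟩
    have h2 : ψ (s g * s h * (s (g * h))⁻¹) = ψ (s g) * ψ (s h) * (ψ (s (g * h)))⁻¹ := by
      simp
    rw [h2] at h1
    rw [h1, mul_comm (τ' _), mul_inv_cancel_left]
end
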